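/- arXiv:1210.6139 — 6 statements merged into one kernel-verified Lean document; each statement's English description precedes it below -/
import Mathlib

section
/- For every integer n ≥ 1 and every fixed a ∈ ℝ, the derivative of the Kravchuk polynomial with respect to x satisfies d/dx K_n(x,a) = −2·∑_{i=1}^{n} ((1−(−1)^i)/(2i))·K_{n−i}(x,a); equivalently, d/dx K_n(x,a) = −2·∑_{i odd, 1 ≤ i ≤ n} (1/i)·K_{n−i}(x,a). -/
/-!
Write `B t = ∑ₖ C(t,k) Xᵏ` for the binomial series `(1 + X)ᵗ`; then `K_n(x,a)` is the
`n`-th coefficient of `B x (-X) * B (a - x) X`. By Vandermonde, `B (s + t) = B s * B t`, so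
coefficientwise `d/dt B t = L * B t`, where `L = log (1 + X)` is the derivative of `B` at
`t = 0` (there `d/dt C(t,k) = (-1)^(k+1)/k`, since `C(t,k) = t/k * C(t-1,k-1)` and
`C(-1,k-1) = (-1)^(k-1)`). Hence the `x`-derivative of the generating series is
`L(-X) - L(X) = -2 ∑_{i odd} Xⁱ / i` times it.
-/

/-- Generalized binomial coefficient `C(t, k) = t(t-1)⋯(t-k+1)/k!` of a real number. -/
noncomputable def genBinom (t : ℝ) (k : ℕ) : ℝ :=
  (∏ j ∈ Finset.range k, (t - j)) / (Nat.factorial k)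

/-- The binary Kravchuk polynomial `K_n(x,a) = ∑_{i=0}^n (-1)^i C(x,i) C(a-x, n-i)`. -/
noncomputable def K (n : ℕ) (x a : ℝ) : ℝ :=
  ∑ i ∈ Finset.range (n + 1), (-1 : ℝ) ^ i * genBinom x i * genBinom (a - x) (n - i)

open PowerSeries Finset

lemma genBinom_eq_choose (t : ℝ) (k : ℕ) : genBinom t k = Ring.choose t k := by
  rw [Ring.choose_eq_smul, ← Polynomial.aeval_eq_smeval, Polynomial.aeval_def,
    ← Polynomial.eval_map, descPochhammer_map, descPochhammer_eval_eq_prod_range, smul_eq_mul,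
    genBinom, div_eq_inv_mul]

lemma coeff_binomialSeries (t : ℝ) (k : ℕ) :
    coeff k (PowerSeries.binomialSeries ℝ t) = genBinom t k := by
  simp [genBinom_eq_choose]

noncomputable def kravchukSeries (x a : ℝ) : ℝ⟦X⟧ :=
  rescale (-1) (PowerSeries.binomialSeries ℝ x) * PowerSeries.binomialSeries ℝ (a - x)

lemma coeff_kravchukSeries (n : ℕ) (x a : ℝ) : coeff n (kravchukSeries x a) = K n x a := by
  rw [kravchukSeries, coeff_mul, Nat.sum_antidiagonal_eq_sum_range_succ_mk, K]
  simp only [coeff_rescale, coeff_binomialSeries, mul_assoc]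

variable {𝕜 : Type*} [NontriviallyNormedField 𝕜]

def HasCoeffDerivAt (F : 𝕜 → 𝕜⟦X⟧) (F' : 𝕜⟦X⟧) (x : 𝕜) : Prop :=
  ∀ n, HasDerivAt (fun t => coeff n (F t)) (coeff n F') x

namespace HasCoeffDerivAt

variable {F G : 𝕜 → 𝕜⟦X⟧} {F' G' : 𝕜⟦X⟧} {x : 𝕜}

lemma const (P : 𝕜⟦X⟧) (x : 𝕜) : HasCoeffDerivAt (fun _ => P) 0 x := fun n => by
  simpa using hasDerivAt_const x (coeff n P)

lemma mul (hF : HasCoeffDerivAt F F' x) (hG : HasCoeffDerivAt G G' x) :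
    HasCoeffDerivAt (fun t => F t * G t) (F' * G x + F x * G') x := fun n => by
  simp only [coeff_mul, map_add, ← sum_add_distrib]
  exact HasDerivAt.fun_sum fun p _ => (hF p.1).mul (hG p.2)

lemma rescale (c : 𝕜) (hF : HasCoeffDerivAt F F' x) :
    HasCoeffDerivAt (fun t => rescale c (F t)) (rescale c F') x := fun n => by
  simpa only [coeff_rescale] using (hF n).const_mul (c ^ n)

lemma comp_sub_const (a : 𝕜) (hF : HasCoeffDerivAt F F' (x - a)) :
    HasCoeffDerivAt (fun t => F (t - a)) F' x := fun n => (hF n).comp_sub_const x a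

lemma comp_const_sub (a : 𝕜) (hF : HasCoeffDerivAt F F' (a - x)) :
    HasCoeffDerivAt (fun t => F (a - t)) (-F') x := fun n => by
  simpa only [map_neg] using (hF n).comp_const_sub a x

lemma deriv_coeff (hF : HasCoeffDerivAt F F' x) (n : ℕ) :
    deriv (fun t => coeff n (F t)) x = coeff n F' :=
  (hF n).deriv

end HasCoeffDerivAt

-- At `j = 0` division by zero gives the constant coefficient `0`.
noncomputable def logOneAddSeries : ℝ⟦X⟧ := mk fun j => (-1) ^ (j + 1) / j

lemma hasDerivAt_genBinom_zero (k : ℕ) :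
    HasDerivAt (fun t => genBinom t k) (coeff k logOneAddSeries) 0 := by
  cases k with
  | zero => simpa [genBinom, logOneAddSeries] using hasDerivAt_const (0 : ℝ) (1 : ℝ)
  | succ r =>
    set g : ℝ → ℝ := fun t => ∏ j ∈ range r, (t - (j + 1 : ℕ))
    have hg : g 0 = (-1) ^ r * r.factorial := by
      simp only [g, zero_sub, prod_neg, card_range, ← Nat.cast_prod,
        prod_range_add_one_eq_factorial]
    have hfun : (fun t => genBinom t (r + 1)) = fun t => t * g t / (r + 1).factorial := by
      ext t
      rw [genBinom, prod_range_succ', mul_comm, Nat.cast_zero, sub_zero]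
    rw [hfun]
    have hg' : HasDerivAt g (deriv g 0) 0 := (by fun_prop : DifferentiableAt ℝ g 0).hasDerivAt
    refine (((hasDerivAt_id' 0).fun_mul hg').div_const _).congr_deriv ?_
    rw [logOneAddSeries, coeff_mk, hg, Nat.factorial_succ]
    push_cast
    field_simp
    ring

lemma hasCoeffDerivAt_binomialSeries_zero :
    HasCoeffDerivAt (PowerSeries.binomialSeries ℝ) logOneAddSeries 0 := fun n => by
  simpa only [coeff_binomialSeries] using hasDerivAt_genBinom_zero n

lemma hasCoeffDerivAt_binomialSeries (t : ℝ) :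
    HasCoeffDerivAt (PowerSeries.binomialSeries ℝ)
      (logOneAddSeries * PowerSeries.binomialSeries ℝ t) t := by
  have h : HasCoeffDerivAt
      (fun s => PowerSeries.binomialSeries ℝ s * PowerSeries.binomialSeries ℝ t)
      (logOneAddSeries * PowerSeries.binomialSeries ℝ t) (t - t) := by
    simpa using
      hasCoeffDerivAt_binomialSeries_zero.mul (.const (PowerSeries.binomialSeries ℝ t) 0)
  simpa [← PowerSeries.binomialSeries_add] using h.comp_sub_const t

lemma hasCoeffDerivAt_kravchukSeries (x a : ℝ) :
    HasCoeffDerivAt (fun t => kravchukSeries t a)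
      ((rescale (-1) logOneAddSeries - logOneAddSeries) * kravchukSeries x a) x := by
  have h := ((hasCoeffDerivAt_binomialSeries x).rescale (-1)).mul
    ((hasCoeffDerivAt_binomialSeries (a - x)).comp_const_sub a)
  unfold kravchukSeries
  convert h using 1
  rw [map_mul]
  ring

lemma coeff_rescale_neg_one_sub_logOneAddSeries (i : ℕ) :
    coeff i (rescale (-1) logOneAddSeries - logOneAddSeries)
      = -2 * ((1 - (-1) ^ i) / (2 * i)) := by
  have hsign : (-1 : ℝ) ^ i * (-1) ^ (i + 1) = -1 := by
    rw [← pow_add, Odd.neg_one_pow ⟨i, by ring⟩]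
  rw [map_sub, coeff_rescale, logOneAddSeries, coeff_mk]
  linear_combination hsign / (i : ℝ)

lemma Finset.Nat.sum_antidiagonal_eq_sum_Icc_of_zero {M : Type*} [AddCommMonoid M]
    (f : ℕ → ℕ → M) (n : ℕ) (hf : ∀ m, f 0 m = 0) :
    ∑ p ∈ antidiagonal n, f p.1 p.2 = ∑ i ∈ Icc 1 n, f i (n - i) := by
  rw [Nat.sum_antidiagonal_eq_sum_range_succ f, sum_range_succ', hf, add_zero,
    ← Ico_add_one_right_eq_Icc, sum_Ico_eq_sum_range, Nat.add_sub_cancel]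
  simp only [add_comm 1]

theorem kravchuk_deriv_x_general (n : ℕ) (a x : ℝ) :
    deriv (fun t : ℝ => K n t a) x
      = -2 * ∑ i ∈ Finset.Icc 1 n, ((1 - (-1 : ℝ) ^ i) / (2 * i)) * K (n - i) x a := by
  simp_rw [← coeff_kravchukSeries n]
  rw [(hasCoeffDerivAt_kravchukSeries x a).deriv_coeff, coeff_mul, mul_sum]
  simp only [coeff_rescale_neg_one_sub_logOneAddSeries, coeff_kravchukSeries, mul_assoc]
  exact Nat.sum_antidiagonal_eq_sum_Icc_of_zero
    (fun i j => -2 * ((1 - (-1) ^ i) / (2 * i) * K j x a)) n (fun _ => by simp)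

/-- For `n ≥ 1`, `d/dx K_n(x,a) = -2 ∑_{i=1}^n ((1-(-1)^i)/(2i)) K_{n-i}(x,a)`. -/
theorem kravchuk_deriv_x (n : ℕ) (hn : 1 ≤ n) (a x : ℝ) :
    deriv (fun t : ℝ => K n t a) x
      = -2 * ∑ i ∈ Finset.Icc 1 n, ((1 - (-1 : ℝ) ^ i) / (2 * i)) * K (n - i) x a :=
  kravchuk_deriv_x_general n a x
end

section
/- If P ∈ ℚ[x_0,…,x_N] satisfies D_{K1}(P) = 0, then for every fixed a ∈ ℝ the value P(K_0(x,a), K_1(x,a), …, K_N(x,a)) is independent of x; that is, for all x, x′, a ∈ ℝ one has P(K(x,a)) = P(K(x′,a)). -/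
/-- The variable `x_i` of `ℚ[x_0,…,x_N]` (for `i ≤ N`). -/
noncomputable def Xv (N : ℕ) (i : ℕ) : MvPolynomial (Fin (N + 1)) ℚ :=
  if h : i ≤ N then MvPolynomial.X ⟨i, Nat.lt_succ_of_le h⟩ else 0

/-- The first Kravchuk derivation: `D_{K1}(x_0)=0`,
`D_{K1}(x_m)=∑_{i=1}^m ((1-(-1)^i)/(2i)) x_{m-i}`. -/
noncomputable def DK1 (N : ℕ) :
    Derivation ℚ (MvPolynomial (Fin (N + 1)) ℚ) (MvPolynomial (Fin (N + 1)) ℚ) :=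
  MvPolynomial.mkDerivation ℚ fun m : Fin (N + 1) =>
    ∑ i ∈ Finset.Icc 1 (m : ℕ),
      MvPolynomial.C ((1 - (-1 : ℚ) ^ i) / (2 * i)) * Xv N ((m : ℕ) - i)

section KravchukAux
open Polynomial Finset

open Polynomial Finset

noncomputable def Bp (k : ℕ) : Polynomial ℝ :=
  C ((k.factorial : ℝ))⁻¹ * ∏ j ∈ range k, (X - C (j : ℝ))

lemma Bp_zero : Bp 0 = 1 := by simp [Bp]

lemma Bp_succ (k : ℕ) : Bp (k + 1) = C (((k : ℝ) + 1))⁻¹ * (Bp k * (X - C (k : ℝ))) := by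
  simp only [Bp, Finset.prod_range_succ, Nat.factorial_succ]
  push_cast
  rw [mul_comm ((k:ℝ)+1), mul_inv]
  simp only [map_mul]
  ring

lemma mul_Bp (k : ℕ) : (X - C (k : ℝ)) * Bp k = C ((k : ℝ) + 1) * Bp (k + 1) := by
  rw [Bp_succ, ← mul_assoc, ← map_mul]
  rw [mul_inv_cancel₀ (by positivity : ((k:ℝ)+1) ≠ 0)]
  ring_nf
  simp [mul_comm]

noncomputable def Sp (k : ℕ) : Polynomial ℝ :=
  ∑ i ∈ Finset.Icc 1 k, C ((-1 : ℝ) ^ (i - 1) / i) * Bp (k - i)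

lemma termwise (k i : ℕ) (h1 : 1 ≤ i) (h2 : i ≤ k) :
    C (((k:ℝ)+1) * ((-1:ℝ)^(i-1)/i)) * Bp (k+1-i)
      = C ((-1:ℝ)^(i-1)/i) * Bp (k-i) * (X - C (k:ℝ))
        + (C ((-1:ℝ)^(i-1)) * Bp (k+1-i) - C ((-1:ℝ)^i) * Bp (k-i)) := by
  obtain ⟨j, rfl⟩ : ∃ j, k = j + i := ⟨k - i, (Nat.sub_add_cancel h2).symm⟩
  have e1 : j + i + 1 - i = j + 1 := by omega
  have e2 : j + i - i = j := by omega
  rw [e1, e2]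
  have hi : (i:ℝ) ≠ 0 := by
    have : 0 < i := h1
    exact_mod_cast this.ne'
  have hpow : (-1:ℝ)^i = -(-1:ℝ)^(i-1) := by
    conv_lhs => rw [show i = (i-1)+1 by omega]
    rw [pow_succ]; ring
  have hmul := mul_Bp j
  push_cast
  calc C (((j:ℝ)+(i:ℝ)+1) * ((-1:ℝ)^(i-1)/i)) * Bp (j+1)
      = (C ((-1:ℝ)^(i-1)/i) * C ((j:ℝ)+1) + C ((-1:ℝ)^(i-1))) * Bp (j+1) := by
        rw [← map_mul, ← map_add]; congr 1; field_simp; ring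
    _ = C ((-1:ℝ)^(i-1)/i) * ((X - C (j:ℝ)) * Bp j) + C ((-1:ℝ)^(i-1)) * Bp (j+1) := by
        rw [hmul]; ring
    _ = C ((-1:ℝ)^(i-1)/i) * Bp j * (X - C ((j:ℝ)+(i:ℝ)))
        + C ((-1:ℝ)^(i-1)/i) * C (i:ℝ) * Bp j + C ((-1:ℝ)^(i-1)) * Bp (j+1) := by
        rw [map_add]; ring
    _ = C ((-1:ℝ)^(i-1)/i) * Bp j * (X - C ((j:ℝ)+(i:ℝ)))
        + (C ((-1:ℝ)^(i-1)) * Bp (j+1) - C ((-1:ℝ)^i) * Bp j) := by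
        rw [show C ((-1:ℝ)^(i-1)/i) * C (i:ℝ) = C ((-1:ℝ)^(i-1)) by
          rw [← map_mul]; congr 1; field_simp]
        rw [hpow, map_neg]; ring

lemma key_alg (k : ℕ) :
    C ((k : ℝ) + 1) * Sp (k + 1) = (X - C (k : ℝ)) * Sp k + Bp k := by
  have step1 : C ((k : ℝ) + 1) * Sp (k + 1)
      = ∑ i ∈ Finset.Icc 1 (k+1), C (((k:ℝ)+1) * ((-1:ℝ)^(i-1)/i)) * Bp (k+1-i) := by
    rw [Sp, Finset.mul_sum]
    refine Finset.sum_congr rfl fun i _ => ?_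
    rw [map_mul]; ring
  rw [step1, Finset.sum_Icc_succ_top (by omega : 1 ≤ k + 1)]
  have top : C (((k:ℝ)+1) * ((-1:ℝ)^(k+1-1)/((k+1:ℕ):ℝ))) * Bp (k+1-(k+1)) = C ((-1:ℝ)^k) := by
    have h0 : k + 1 - (k+1) = 0 := by omega
    have h1 : k + 1 - 1 = k := by omega
    rw [h0, h1, Bp_zero, mul_one]
    congr 1
    have : ((k:ℝ)+1) ≠ 0 := by positivity
    push_cast
    field_simp
  rw [top]
  have step2 : ∑ i ∈ Finset.Icc 1 k, C (((k:ℝ)+1) * ((-1:ℝ)^(i-1)/i)) * Bp (k+1-i)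
      = ∑ i ∈ Finset.Icc 1 k, (C ((-1:ℝ)^(i-1)/i) * Bp (k-i) * (X - C (k:ℝ))
        + (C ((-1:ℝ)^(i-1)) * Bp (k+1-i) - C ((-1:ℝ)^i) * Bp (k-i))) := by
    refine Finset.sum_congr rfl fun i hi => ?_
    simp only [Finset.mem_Icc] at hi
    exact termwise k i hi.1 hi.2
  rw [step2, Finset.sum_add_distrib, ← Finset.sum_mul]
  have tel : ∑ i ∈ Finset.Icc 1 k, (C ((-1:ℝ)^(i-1)) * Bp (k+1-i) - C ((-1:ℝ)^i) * Bp (k-i))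
      = Bp k - C ((-1:ℝ)^k) := by
    set f : ℕ → Polynomial ℝ := fun i => C ((-1:ℝ)^(i-1)) * Bp (k+1-i) with hf
    have hterm : ∀ i ∈ Finset.Icc 1 k,
        C ((-1:ℝ)^(i-1)) * Bp (k+1-i) - C ((-1:ℝ)^i) * Bp (k-i) = f i - f (i+1) := by
      intro i hi
      simp only [Finset.mem_Icc] at hi
      have : i + 1 - 1 = i := by omega
      have h2 : k + 1 - (i+1) = k - i := by omega
      simp only [hf, this, h2]
    rw [Finset.sum_congr rfl hterm]
    rw [show Finset.Icc 1 k = Finset.Ico 1 (k+1) by rfl]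
    rw [Finset.sum_Ico_eq_sum_range]
    have h3 := Finset.sum_range_sub' (fun i' => f (1 + i')) k
    simp only [show ∀ x:ℕ, 1 + x + 1 = 1 + (x+1) from fun x => by omega,
      Nat.add_sub_cancel]
    rw [h3]
    have hf1 : f (1 + 0) = Bp k := by simp [hf]
    have hfk : f (1 + k) = C ((-1:ℝ)^k) := by
      simp only [hf]
      have : 1 + k - 1 = k := by omega
      have h2 : k + 1 - (1 + k) = 0 := by omega
      rw [this, h2, Bp_zero, mul_one]
    rw [hf1, hfk]
  rw [tel]
  rw [Sp]
  ring

lemma deriv_Bp (k : ℕ) : derivative (Bp k) = Sp k := by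
  induction k with
  | zero => simp [Bp_zero, Sp]
  | succ k ih =>
    rw [Bp_succ]
    rw [derivative_mul, derivative_C, derivative_mul, derivative_sub, derivative_X,
      derivative_C, ih]
    have h := key_alg k
    have h2 : Sp (k+1) = C (((k:ℝ)+1))⁻¹ * (C ((k : ℝ) + 1) * Sp (k + 1)) := by
      rw [← mul_assoc, ← map_mul, inv_mul_cancel₀ (by positivity : ((k:ℝ)+1) ≠ 0)]
      simp
    rw [h2, h]
    ring

noncomputable def Bm (a : ℝ) (k : ℕ) : Polynomial ℝ := (Bp k).comp (C a - X)

lemma Bm_zero (a : ℝ) : Bm a 0 = 1 := by simp [Bm, Bp_zero]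

lemma deriv_Bm (a : ℝ) (k : ℕ) :
    derivative (Bm a k) = -∑ i ∈ Finset.Icc 1 k, C ((-1:ℝ)^(i-1)/i) * Bm a (k-i) := by
  rw [Bm, derivative_comp, deriv_Bp, Sp]
  have h1 : derivative (C a - X) = -1 := by simp
  rw [h1]
  have h2 : ((∑ i ∈ Finset.Icc 1 k, C ((-1:ℝ)^(i-1)/i) * Bp (k-i)).comp (C a - X))
      = ∑ i ∈ Finset.Icc 1 k, C ((-1:ℝ)^(i-1)/i) * Bm a (k-i) := by
    rw [show ∀ p q : Polynomial ℝ, p.comp q = Polynomial.eval₂ Polynomial.C q p from fun _ _ => rfl]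
    rw [Polynomial.eval₂_finset_sum]
    exact Finset.sum_congr rfl fun i _ => by
      rw [Polynomial.eval₂_mul, Polynomial.eval₂_C]; rfl
  rw [h2]; ring

noncomputable def Kp (a : ℝ) (n : ℕ) : Polynomial ℝ :=
  ∑ i ∈ Finset.range (n+1), C ((-1:ℝ)^i) * (Bp i * Bm a (n-i))

lemma T1eq (a : ℝ) (n : ℕ) :
    (∑ i ∈ Finset.range (n+1), ∑ j ∈ Finset.Icc 1 i,
      C ((-1:ℝ)^i) * (C ((-1:ℝ)^(j-1)/j) * Bp (i-j)) * Bm a (n-i))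
    = ∑ j ∈ Finset.Icc 1 n, C (-(1/(j:ℝ))) * Kp a (n-j) := by
  rw [Finset.sum_comm' (t' := Finset.Icc 1 n) (s' := fun j => Finset.Icc j n)
    (fun i j => by simp only [Finset.mem_range, Finset.mem_Icc]; omega)]
  refine Finset.sum_congr rfl fun j hj => ?_
  simp only [Finset.mem_Icc] at hj
  rw [← Finset.Ico_add_one_right_eq_Icc, Finset.sum_Ico_eq_sum_range]
  rw [show n + 1 - j = (n-j) + 1 by omega, Kp, Finset.mul_sum]
  refine Finset.sum_congr rfl fun i _ => ?_
  have e1 : j + i - j = i := by omega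
  have e2 : n - (j+i) = (n-j) - i := by omega
  rw [e1, e2]
  have hc : (-1:ℝ)^(j+i) * ((-1:ℝ)^(j-1)/j) = -(1/(j:ℝ)) * (-1:ℝ)^i := by
    have hp : (-1:ℝ)^(j+i) * (-1:ℝ)^(j-1) = -(-1:ℝ)^i := by
      rw [← pow_add, show j+i+(j-1) = 2*(j-1)+1+i by omega, pow_add, pow_add, pow_mul]
      norm_num
    rw [mul_div_assoc', hp]; ring
  calc C ((-1:ℝ)^(j+i)) * (C ((-1:ℝ)^(j-1)/j) * Bp i) * Bm a ((n-j)-i)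
      = C ((-1:ℝ)^(j+i) * ((-1:ℝ)^(j-1)/j)) * (Bp i * Bm a ((n-j)-i)) := by
        rw [map_mul]; ring
    _ = C (-(1/(j:ℝ)) * (-1:ℝ)^i) * (Bp i * Bm a ((n-j)-i)) := by rw [hc]
    _ = C (-(1/(j:ℝ))) * (C ((-1:ℝ)^i) * (Bp i * Bm a ((n-j)-i))) := by
        rw [map_mul]; ring

lemma T2eq (a : ℝ) (n : ℕ) :
    (∑ i ∈ Finset.range (n+1), ∑ j ∈ Finset.Icc 1 (n-i),
      C ((-1:ℝ)^i) * Bp i * (C ((-1:ℝ)^(j-1)/j) * Bm a (n-i-j)))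
    = ∑ j ∈ Finset.Icc 1 n, C ((-1:ℝ)^(j-1)/(j:ℝ)) * Kp a (n-j) := by
  rw [Finset.sum_comm' (t' := Finset.Icc 1 n) (s' := fun j => Finset.range ((n-j)+1))
    (fun i j => by simp only [Finset.mem_range, Finset.mem_Icc]; omega)]
  refine Finset.sum_congr rfl fun j hj => ?_
  simp only [Finset.mem_Icc] at hj
  rw [Kp, Finset.mul_sum]
  refine Finset.sum_congr rfl fun i _ => ?_
  have e2 : n - i - j = (n-j) - i := by omega
  rw [e2]
  ring

lemma deriv_Kp (a : ℝ) (n : ℕ) :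
    derivative (Kp a n) = ∑ j ∈ Finset.Icc 1 n, C (((-1:ℝ)^j - 1)/j) * Kp a (n-j) := by
  have expand : derivative (Kp a n)
      = (∑ i ∈ Finset.range (n+1), ∑ j ∈ Finset.Icc 1 i,
          C ((-1:ℝ)^i) * (C ((-1:ℝ)^(j-1)/j) * Bp (i-j)) * Bm a (n-i))
      - (∑ i ∈ Finset.range (n+1), ∑ j ∈ Finset.Icc 1 (n-i),
          C ((-1:ℝ)^i) * Bp i * (C ((-1:ℝ)^(j-1)/j) * Bm a (n-i-j))) := by
    rw [Kp, map_sum, ← Finset.sum_sub_distrib]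
    refine Finset.sum_congr rfl fun i _ => ?_
    rw [derivative_mul, derivative_C, zero_mul, zero_add, derivative_mul,
      deriv_Bp, deriv_Bm, Sp]
    rw [mul_add, sub_eq_add_neg]
    congr 1
    · rw [Finset.sum_mul, Finset.mul_sum]
      exact Finset.sum_congr rfl fun j _ => by ring
    · rw [mul_neg, mul_neg, Finset.mul_sum, neg_inj, Finset.mul_sum]
      exact Finset.sum_congr rfl fun j _ => by ring
  rw [expand, T1eq, T2eq, ← Finset.sum_sub_distrib]
  refine Finset.sum_congr rfl fun j hj => ?_
  simp only [Finset.mem_Icc] at hj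
  rw [← sub_mul, ← map_sub]
  congr 2
  have hpow : (-1:ℝ)^j = -(-1:ℝ)^(j-1) := by
    conv_lhs => rw [show j = (j-1)+1 by omega]
    rw [pow_succ]; ring
  rw [hpow]; ring

lemma eval_Bp (y : ℝ) (k : ℕ) : Polynomial.eval y (Bp k) = genBinom y k := by
  rw [Bp, genBinom, eval_mul, eval_C, Polynomial.eval_prod]
  simp only [eval_sub, eval_X, eval_C]
  rw [div_eq_mul_inv, mul_comm]

lemma eval_Bm (y a : ℝ) (k : ℕ) : Polynomial.eval y (Bm a k) = genBinom (a - y) k := by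
  rw [Bm, eval_comp, eval_sub, eval_C, eval_X, eval_Bp]

lemma eval_Kp (y a : ℝ) (n : ℕ) : Polynomial.eval y (Kp a n) = K n y a := by
  rw [Kp, K, Polynomial.eval_finset_sum]
  refine Finset.sum_congr rfl fun i _ => ?_
  rw [eval_mul, eval_mul, eval_C, eval_Bp, eval_Bm]
  ring

lemma Phi_DK1_X (N : ℕ) (a : ℝ) (m : Fin (N + 1)) :
    derivative (Kp a (m : ℕ))
      = C (-2:ℝ) * (MvPolynomial.aeval (fun i : Fin (N+1) => Kp a (i:ℕ))
          (DK1 N (MvPolynomial.X m))) := by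
  rw [DK1, MvPolynomial.mkDerivation_X, map_sum, deriv_Kp, Finset.mul_sum]
  refine Finset.sum_congr rfl fun j hj => ?_
  simp only [Finset.mem_Icc] at hj
  have hm : (m : ℕ) ≤ N := by omega
  have hmN : (m : ℕ) - j ≤ N := by omega
  rw [Xv, dif_pos hmN, map_mul, MvPolynomial.aeval_C, MvPolynomial.aeval_X]
  have hcast : algebraMap ℚ (Polynomial ℝ) ((1 - (-1 : ℚ) ^ j) / (2 * j))
      = C (((1 - (-1 : ℝ) ^ j) / (2 * j))) := by
    rw [Polynomial.algebraMap_apply]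
    congr 1
    rw [eq_ratCast (algebraMap ℚ ℝ)]
    push_cast
    ring
  rw [hcast, ← mul_assoc, ← map_mul]
  congr 1
  have hj0 : (j:ℝ) ≠ 0 := by
    have : 0 < j := hj.1
    exact_mod_cast this.ne'
  field_simp
  ring

lemma main_deriv (N : ℕ) (a : ℝ) (P : MvPolynomial (Fin (N + 1)) ℚ) :
    derivative (MvPolynomial.aeval (fun i : Fin (N+1) => Kp a (i:ℕ)) P)
      = C (-2:ℝ) * MvPolynomial.aeval (fun i : Fin (N+1) => Kp a (i:ℕ)) (DK1 N P) := by
  induction P using MvPolynomial.induction_on with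
  | C q =>
    have h0 : DK1 N (MvPolynomial.C q) = 0 := by
      rw [show (MvPolynomial.C q : MvPolynomial (Fin (N+1)) ℚ) = algebraMap ℚ _ q from rfl]
      exact Derivation.map_algebraMap _ q
    rw [h0, map_zero, mul_zero, MvPolynomial.aeval_C, Polynomial.algebraMap_apply,
      derivative_C]
  | add p q hp hq =>
    rw [map_add, map_add, map_add, map_add, hp, hq]; ring
  | mul_X p m hp =>
    rw [map_mul, derivative_mul, hp, MvPolynomial.aeval_X, Derivation.leibniz, map_add,
      smul_eq_mul, smul_eq_mul, map_mul, map_mul, MvPolynomial.aeval_X, Phi_DK1_X N a m]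
    ring


end KravchukAux

open Polynomial in
/-- If `D_{K1}(P) = 0` then `P(K(x,a))` does not depend on `x`. -/
theorem aeval_kravchuk_const_of_DK1_eq_zero (N : ℕ) (P : MvPolynomial (Fin (N + 1)) ℚ)
    (hP : DK1 N P = 0) (x x' a : ℝ) :
    MvPolynomial.aeval (fun i : Fin (N + 1) => K (i : ℕ) x a) P
      = MvPolynomial.aeval (fun i : Fin (N + 1) => K (i : ℕ) x' a) P := by
  have heval : ∀ (y : ℝ) (Q : MvPolynomial (Fin (N+1)) ℚ),
      Polynomial.eval y (MvPolynomial.aeval (fun i : Fin (N+1) => Kp a (i:ℕ)) Q)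
        = MvPolynomial.aeval (fun i : Fin (N + 1) => K (i : ℕ) y a) Q := by
    intro y Q
    induction Q using MvPolynomial.induction_on with
    | C q => simp [MvPolynomial.aeval_C, Polynomial.algebraMap_apply]
    | add p q hp hq => simp only [map_add, eval_add, hp, hq]
    | mul_X p m hp =>
      rw [map_mul, map_mul, eval_mul, hp, MvPolynomial.aeval_X, MvPolynomial.aeval_X,
        eval_Kp]
  have hd : derivative (MvPolynomial.aeval (fun i : Fin (N+1) => Kp a (i:ℕ)) P) = 0 := by
    rw [main_deriv, hP, map_zero, mul_zero]
  have hQ := Polynomial.eq_C_of_natDegree_eq_zero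
    (Polynomial.natDegree_eq_zero_of_derivative_eq_zero hd)
  rw [← heval x P, ← heval x' P, hQ, eval_C, eval_C]
end

section
/- Define T(n,i) := ∑_{j=i}^{n} (−1)^{j−i} · 2^{n−j} · j! · S(n,j) · binom(j−1, i−1) for 1 ≤ i ≤ n. Let ψ : ℚ[x_0,…,x_N] → ℚ[x_0,…,x_N] be the ℚ-algebra homomorphism with ψ(x_0) = x_0 and ψ(x_n) = ∑_{i=1}^{n} T(n,i)·x_i for 1 ≤ n ≤ N, and let D be the basic Weitzenböck derivation, D(x_0) = 0 and D(x_n) = n·x_{n−1} for 1 ≤ n ≤ N. Then ψ intertwines D and the first Kravchuk derivation: D_{K1}(ψ(P)) = ψ(D(P)) for all P ∈ ℚ[x_0,…,x_N]. -/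
/-- Stirling numbers of the second kind: the number of partitions of an `n`-element
set into `k` nonempty blocks (via the standard recurrence). -/
def stirling2 : ℕ → ℕ → ℕ
  | 0, 0 => 1
  | 0, _ + 1 => 0
  | _ + 1, 0 => 0
  | n + 1, k + 1 => stirling2 n k + (k + 1) * stirling2 n (k + 1)

/-- `T(n,i) = ∑_{j=i}^n (-1)^{j-i} 2^{n-j} j! S(n,j) binom(j-1,i-1)`. -/
noncomputable def T (n i : ℕ) : ℚ :=
  ∑ j ∈ Finset.Icc i n,
    (-1 : ℚ) ^ (j - i) * 2 ^ (n - j) * (Nat.factorial j) * stirling2 n j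
      * ((j - 1).choose (i - 1))

/-- The basic Weitzenböck derivation: `D(x_0)=0`, `D(x_n)=n x_{n-1}`. -/
noncomputable def DW (N : ℕ) :
    Derivation ℚ (MvPolynomial (Fin (N + 1)) ℚ) (MvPolynomial (Fin (N + 1)) ℚ) :=
  MvPolynomial.mkDerivation ℚ fun n : Fin (N + 1) =>
    MvPolynomial.C (((n : ℕ) : ℚ)) * Xv N ((n : ℕ) - 1)

/-- The `ℚ`-algebra homomorphism `ψ` with `ψ(x_0)=x_0`, `ψ(x_n)=∑_{i=1}^n T(n,i) x_i`. -/
noncomputable def psiAK1 (N : ℕ) :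
    MvPolynomial (Fin (N + 1)) ℚ →ₐ[ℚ] MvPolynomial (Fin (N + 1)) ℚ :=
  MvPolynomial.aeval fun n : Fin (N + 1) =>
    if (n : ℕ) = 0 then Xv N 0
    else ∑ i ∈ Finset.Icc 1 (n : ℕ), MvPolynomial.C (T (n : ℕ) i) * Xv N i

/-!
`ψ(x_n)` is the coefficient of `t ^ n / n!` in `∑ᵢ tanh(t) ^ i * x_i`: `T(n, i)` is the `n`-th
derivative of `tanh ^ i = (u / (1 + u)) ^ i` at `0`, where `u = (exp (2 t) - 1) / 2`, and
`2 ^ (n - j) * j! * S(n, j)` is the `n`-th derivative of `u ^ j`. On `∑ₙ x_n t ^ n / n!` the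
Weitzenböck derivation is multiplication by `t`, while on `∑ₘ x_m s ^ m` the Kravchuk derivation is
multiplication by `artanh s = ∑_{k odd} s ^ k / k`; hence `artanh (tanh t) = t` is the intertwining.
Both facts are used through coefficients only: `T` satisfies the recursion coming from
`(tanh ^ i)' = i * (tanh ^ (i - 1) - tanh ^ (i + 1))`, and `tanh ^ m * artanh (tanh t)` is compared
with `t * tanh ^ m` by induction on the order of the derivative.
-/

open Finset

/-- `tanhPowCoeff n i` is the `n`-th derivative of `tanh ^ i` at `0`. -/
noncomputable def tanhPowCoeff : ℕ → ℕ → ℚ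
  | 0, i => if i = 0 then 1 else 0
  | n + 1, i => i * (tanhPowCoeff n (i - 1) - tanhPowCoeff n (i + 1))

lemma tanhPowCoeff_succ (n i : ℕ) :
    tanhPowCoeff (n + 1) i = i * (tanhPowCoeff n (i - 1) - tanhPowCoeff n (i + 1)) := rfl

lemma tanhPowCoeff_succ_zero (n : ℕ) : tanhPowCoeff (n + 1) 0 = 0 := by
  simp [tanhPowCoeff_succ]

lemma tanhPowCoeff_eq_zero_of_lt {n i : ℕ} (h : n < i) : tanhPowCoeff n i = 0 := by
  induction n generalizing i with
  | zero => simp [tanhPowCoeff, Nat.pos_iff_ne_zero.mp h]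
  | succ n ih => rw [tanhPowCoeff_succ, ih (by omega), ih (by omega), sub_zero, mul_zero]

lemma natCast_mul_tanhPowCoeff (n m : ℕ) :
    n * tanhPowCoeff n m
      = m * (n * tanhPowCoeff (n - 1) (m - 1) - n * tanhPowCoeff (n - 1) (m + 1)) := by
  cases n with
  | zero => simp
  | succ n => rw [tanhPowCoeff_succ, Nat.add_sub_cancel]; ring

lemma stirling2_eq_stirlingSecond : stirling2 = Nat.stirlingSecond := by
  funext n k
  induction n generalizing k with
  | zero => cases k <;> rfl
  | succ n ih =>
    cases k with
    | zero => rfl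
    | succ k => rw [stirling2, ih, ih, Nat.stirlingSecond_succ_succ, add_comm]

/-- `expPowCoeff n j` is the `n`-th derivative of `((exp (2 t) - 1) / 2) ^ j` at `0`. -/
noncomputable def expPowCoeff (n j : ℕ) : ℚ := 2 ^ (n - j) * j.factorial * stirling2 n j

lemma expPowCoeff_zero_right (n : ℕ) : expPowCoeff n 0 = tanhPowCoeff n 0 := by
  cases n <;> simp [expPowCoeff, stirling2_eq_stirlingSecond, tanhPowCoeff]

lemma expPowCoeff_eq_zero_of_lt {n j : ℕ} (h : n < j) : expPowCoeff n j = 0 := by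
  simp [expPowCoeff, stirling2_eq_stirlingSecond, Nat.stirlingSecond_eq_zero_of_lt h]

lemma expPowCoeff_succ_succ (n j : ℕ) :
    expPowCoeff (n + 1) (j + 1) = (j + 1) * (expPowCoeff n j + 2 * expPowCoeff n (j + 1)) := by
  simp only [expPowCoeff, stirling2_eq_stirlingSecond, Nat.stirlingSecond_succ_succ,
    Nat.add_sub_add_right, Nat.factorial_succ]
  push_cast
  rcases lt_or_ge j n with h | h
  · rw [show n - j = n - (j + 1) + 1 by omega, pow_succ]; ring
  · rw [Nat.stirlingSecond_eq_zero_of_lt (by omega : n < j + 1)]; ring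

lemma two_mul_choose_sub_choose_succ (k m : ℕ) :
    (2 * (k + 1) * k.choose (m + 1) - (k + 2) * (k + 1).choose (m + 1) : ℚ)
      = -(m + 2) * (k.choose m - k.choose (m + 2)) := by
  have h := Nat.add_one_mul_choose_eq k m
  have h' := Nat.add_one_mul_choose_eq k (m + 1)
  have p := Nat.choose_succ_succ k m
  have p' := Nat.choose_succ_succ k (m + 1)
  qify at h h' p p'
  linear_combination h' - h - (k + m + 3) * p + (m + 2) * p'

lemma T_add_one_eq_sum (n i : ℕ) :
    T n (i + 1)
      = ∑ k ∈ range n, (-1) ^ (k + i) * (k.choose i : ℚ) * expPowCoeff n (k + 1) := by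
  calc T n (i + 1)
      = ∑ k ∈ Ico i n, (-1) ^ (k + i) * (k.choose i : ℚ) * expPowCoeff n (k + 1) := by
        rw [T, ← Ico_add_one_right_eq_Icc, ← map_add_right_Ico, sum_map]
        refine sum_congr rfl fun k hk => ?_
        obtain ⟨d, rfl⟩ := Nat.exists_eq_add_of_le (mem_Ico.mp hk).1
        simp only [addRightEmbedding_apply, expPowCoeff, Nat.add_sub_cancel,
          show i + d + 1 - (i + 1) = d by omega, show i + d + i = d + 2 * i by omega, pow_add,
          pow_mul, neg_one_sq, one_pow]
        ring
    _ = _ := sum_subset (fun k hk => mem_range.2 (mem_Ico.1 hk).2) fun k hk hk' => by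
        simp only [mem_range, mem_Ico, not_and, not_lt] at hk hk'
        rw [Nat.choose_eq_zero_of_lt (by omega), Nat.cast_zero, mul_zero, zero_mul]

lemma T_succ_add_one (n i : ℕ) :
    T (n + 1) (i + 1) = (-1) ^ i * (Nat.choose 0 i : ℚ) * tanhPowCoeff n 0
      + ∑ k ∈ range n, (-1) ^ (k + i)
          * (2 * (k + 1) * k.choose i - (k + 2) * (k + 1).choose i : ℚ)
          * expPowCoeff n (k + 1) := by
  simp only [T_add_one_eq_sum, expPowCoeff_succ_succ, mul_add, sum_add_distrib]
  rw [sum_range_succ', sum_range_succ (fun k => _ * (_ * (2 * expPowCoeff n (k + 1)))),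
    expPowCoeff_eq_zero_of_lt (lt_add_one n), expPowCoeff_zero_right]
  simp only [Nat.cast_zero, zero_add, one_mul, mul_zero, add_zero]
  rw [add_right_comm, ← sum_add_distrib, add_comm]
  congr 1
  refine sum_congr rfl fun k _ => ?_
  push_cast
  ring

lemma T_succ_one (n : ℕ) : T (n + 1) 1 = tanhPowCoeff n 0 - T n 2 := by
  rw [T_succ_add_one, T_add_one_eq_sum n 1, sub_eq_add_neg, ← sum_neg_distrib]
  simp only [pow_zero, Nat.choose_self, Nat.choose_zero_right, Nat.choose_one_right, pow_succ]
  push_cast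
  congr 1
  · ring
  · exact sum_congr rfl fun k _ => by ring

lemma T_succ_add_two (n m : ℕ) : T (n + 1) (m + 2) = (m + 2) * (T n (m + 1) - T n (m + 3)) := by
  rw [T_succ_add_one, T_add_one_eq_sum n m, T_add_one_eq_sum n (m + 2), ← sum_sub_distrib,
    mul_sum]
  simp only [Nat.choose_zero_succ, Nat.cast_zero, mul_zero, zero_mul, zero_add]
  refine sum_congr rfl fun k _ => ?_
  rw [two_mul_choose_sub_choose_succ, pow_add, pow_add]
  ring

lemma T_add_one_eq_tanhPowCoeff (n i : ℕ) : T n (i + 1) = tanhPowCoeff n (i + 1) := by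
  induction n generalizing i with
  | zero => simp [T, tanhPowCoeff]
  | succ n ih =>
    rcases i with _ | m
    · rw [T_succ_one, ih, tanhPowCoeff_succ]; simp
    · rw [T_succ_add_two, ih, ih, tanhPowCoeff_succ]; push_cast; ring

noncomputable def kravchukCoeff (k : ℕ) : ℚ := (1 - (-1) ^ k) / (2 * k)

lemma kravchukCoeff_zero : kravchukCoeff 0 = 0 := by simp [kravchukCoeff]

lemma natCast_mul_kravchukCoeff (k : ℕ) : k * kravchukCoeff k = (1 - (-1) ^ k) / 2 := by
  rcases Nat.eq_zero_or_pos k with rfl | hk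
  · simp
  · unfold kravchukCoeff; field_simp

lemma natCast_mul_kravchukCoeff_add_two (k : ℕ) :
    (k + 2 : ℕ) * kravchukCoeff (k + 2) = k * kravchukCoeff k := by
  simp only [natCast_mul_kravchukCoeff, pow_add]; norm_num

lemma natCast_mul_kravchukCoeff_sub (i m : ℕ) :
    i * kravchukCoeff (i - m)
      = m * kravchukCoeff (i - m) + (i - m : ℕ) * kravchukCoeff (i - m) := by
  rcases le_or_gt m i with h | h
  · rw [Nat.cast_sub h]; ring
  · simp [Nat.sub_eq_zero_of_le h.le, kravchukCoeff_zero]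

lemma sum_range_mul_sub_of_periodic (e v : ℕ → ℚ) (he : ∀ k, e (k + 2) = e k) (K : ℕ) :
    ∑ k ∈ range K, e (k + 1) * (v k - v (k + 2))
      = e 1 * v 0 + e 0 * v 1 - e K * v (K + 1) - e (K + 1) * v K := by
  let F : ℕ → ℚ := fun k => -(e k * v (k + 1) + e (k + 1) * v k)
  have hF : ∀ k, e (k + 1) * (v k - v (k + 2)) = F (k + 1) - F k := by
    intro k; simp only [F, he]; ring
  rw [sum_congr rfl fun k _ => hF k, sum_range_sub]; ring

section Sums

variable {B : ℕ} {v : ℕ → ℚ}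

lemma sum_range_natCast_mul_kravchukCoeff_mul_sub (hv : ∀ j, B ≤ j → v j = 0) (m : ℕ) :
    ∑ i ∈ range (B + 1), ((i - m : ℕ) * kravchukCoeff (i - m)) * (v (i - 1) - v (i + 1))
      = v m := by
  rcases le_or_gt B m with hm | hm
  · rw [hv m hm]
    refine sum_eq_zero fun i hi => ?_
    rw [Nat.sub_eq_zero_of_le (by rw [mem_range] at hi; omega)]
    simp
  · have hsplit : B + 1 = (m + 1) + (B - m) := by omega
    rw [hsplit, sum_range_add, sum_eq_zero fun i hi => by
      rw [Nat.sub_eq_zero_of_le (by rw [mem_range] at hi; omega)]; simp, zero_add]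
    have htel := sum_range_mul_sub_of_periodic (fun k => (k : ℚ) * kravchukCoeff k)
      (fun k => v (m + k)) natCast_mul_kravchukCoeff_add_two (B - m)
    simp only [hv (m + (B - m)) (by omega), hv (m + (B - m + 1)) (by omega)] at htel
    rw [sum_congr rfl fun k _ => by
      rw [show m + 1 + k - m = k + 1 by omega, show m + 1 + k - 1 = m + k by omega,
        show m + 1 + k + 1 = m + (k + 2) by omega], htel]
    simp [kravchukCoeff]

lemma sum_range_kravchukCoeff_mul_sub (hv : ∀ j, B ≤ j → v j = 0) (m : ℕ) :
    ∑ i ∈ range (B + 1), kravchukCoeff (i - (m + 1)) * (v (i - 1) - v (i + 1))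
      = ∑ i ∈ range (B + 1), kravchukCoeff (i - m) * v i
        - ∑ i ∈ range (B + 1), kravchukCoeff (i - (m + 2)) * v i := by
  simp only [mul_sub, sum_sub_distrib]
  congr 1
  · rw [sum_range_succ', sum_range_succ, hv B le_rfl]
    simp [kravchukCoeff_zero]
  · rw [sum_range_succ, sum_range_succ', hv (B + 1) (by omega)]
    simp [kravchukCoeff_zero, show ∀ i, i + 1 - (m + 2) = i - (m + 1) by omega]

end Sums

/-- Coefficientwise form of `tanh ^ m * artanh (tanh t) = t * tanh ^ m`. -/
lemma sum_range_kravchukCoeff_mul_tanhPowCoeff {n B : ℕ} (hn : n ≤ B) (m : ℕ) :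
    ∑ i ∈ range (B + 1), kravchukCoeff (i - m) * tanhPowCoeff n i
      = n * tanhPowCoeff (n - 1) m := by
  induction n generalizing m with
  | zero => simp [tanhPowCoeff, kravchukCoeff_zero]
  | succ n ih =>
    have hv : ∀ j, B ≤ j → tanhPowCoeff n j = 0 :=
      fun j hj => tanhPowCoeff_eq_zero_of_lt (by omega)
    have hmul : m * ∑ i ∈ range (B + 1), kravchukCoeff (i - m)
        * (tanhPowCoeff n (i - 1) - tanhPowCoeff n (i + 1)) = n * tanhPowCoeff n m := by
      rcases m with _ | m
      · simpa using (natCast_mul_tanhPowCoeff n 0).symm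
      · rw [sum_range_kravchukCoeff_mul_sub hv, ih (by omega), ih (by omega),
          natCast_mul_tanhPowCoeff n (m + 1)]
        simp
    calc ∑ i ∈ range (B + 1), kravchukCoeff (i - m) * tanhPowCoeff (n + 1) i
        = ∑ i ∈ range (B + 1),
            (m * kravchukCoeff (i - m) + (i - m : ℕ) * kravchukCoeff (i - m))
              * (tanhPowCoeff n (i - 1) - tanhPowCoeff n (i + 1)) := by
          refine sum_congr rfl fun i _ => ?_
          rw [tanhPowCoeff_succ, ← mul_assoc, mul_comm _ (i : ℚ), natCast_mul_kravchukCoeff_sub]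
      _ = n * tanhPowCoeff n m + tanhPowCoeff n m := by
          rw [← hmul, ← sum_range_natCast_mul_kravchukCoeff_mul_sub hv m, mul_sum,
            ← sum_add_distrib]
          exact sum_congr rfl fun i _ => by ring
      _ = (n + 1 : ℕ) * tanhPowCoeff (n + 1 - 1) m := by push_cast; ring

open MvPolynomial

section Polynomials

variable {N : ℕ}

lemma Xv_of_le {i : ℕ} (h : i ≤ N) : Xv N i = X ⟨i, Nat.lt_succ_of_le h⟩ := dif_pos h

lemma Xv_val (n : Fin (N + 1)) : Xv N n = X n := Xv_of_le n.is_le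

lemma DW_Xv {n : ℕ} (h : n ≤ N) : DW N (Xv N n) = C (n : ℚ) * Xv N (n - 1) := by
  rw [Xv_of_le h, DW, mkDerivation_X]

lemma DK1_Xv {i : ℕ} (h : i ≤ N) :
    DK1 N (Xv N i) = ∑ j ∈ range (N + 1), C (kravchukCoeff (i - j)) * Xv N j := by
  rw [Xv_of_le h, DK1, mkDerivation_X]
  calc ∑ k ∈ Icc 1 i, C (kravchukCoeff k) * Xv N (i - k)
      = ∑ j ∈ range i, C (kravchukCoeff (i - j)) * Xv N j := by
        refine sum_nbij' (i - ·) (i - ·) ?_ ?_ ?_ ?_ ?_ <;> intro k hk <;>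
          simp only [mem_Icc, mem_range] at hk ⊢
        · omega
        · omega
        · omega
        · omega
        · rw [Nat.sub_sub_self hk.2]
    _ = _ := sum_subset (range_subset_range.2 (by omega)) fun j _ hj => by
        rw [Nat.sub_eq_zero_of_le (by simpa using hj), kravchukCoeff_zero, map_zero, zero_mul]

lemma psiAK1_Xv {n : ℕ} (h : n ≤ N) :
    psiAK1 N (Xv N n) = ∑ i ∈ range (N + 1), C (tanhPowCoeff n i) * Xv N i := by
  rw [Xv_of_le h, psiAK1, aeval_X]
  rcases n with _ | n
  · simp [tanhPowCoeff]
  · calc ∑ i ∈ Icc 1 (n + 1), C (T (n + 1) i) * Xv N i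
        = ∑ i ∈ Icc 1 (n + 1), C (tanhPowCoeff (n + 1) i) * Xv N i :=
          sum_congr rfl fun i hi => by
            obtain ⟨j, rfl⟩ : ∃ j, i = j + 1 := ⟨i - 1, by rw [mem_Icc] at hi; omega⟩
            rw [T_add_one_eq_tanhPowCoeff]
      _ = _ := sum_subset (fun i hi => by rw [mem_Icc] at hi; rw [mem_range]; omega)
          fun i _ hi => by
          rcases i with _ | i
          · rw [tanhPowCoeff_succ_zero, map_zero, zero_mul]
          · rw [tanhPowCoeff_eq_zero_of_lt (by rw [mem_Icc] at hi; omega), map_zero,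
              zero_mul]

lemma DK1_psiAK1_X (n : Fin (N + 1)) : DK1 N (psiAK1 N (X n)) = psiAK1 N (DW N (X n)) := by
  have h := n.is_le
  rw [← Xv_val]
  calc DK1 N (psiAK1 N (Xv N n))
      = ∑ i ∈ range (N + 1), C (tanhPowCoeff n i)
          * ∑ j ∈ range (N + 1), C (kravchukCoeff (i - j)) * Xv N j := by
        rw [psiAK1_Xv h, map_sum]
        refine sum_congr rfl fun i hi => ?_
        rw [← smul_eq_C_mul, Derivation.map_smul, DK1_Xv (Nat.lt_succ_iff.1 (mem_range.1 hi)),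
          smul_eq_C_mul]
    _ = ∑ j ∈ range (N + 1),
          C (∑ i ∈ range (N + 1), kravchukCoeff (i - j) * tanhPowCoeff n i) * Xv N j := by
        simp only [mul_sum, map_sum, sum_mul, ← mul_assoc, ← map_mul,
          mul_comm (tanhPowCoeff _ _)]
        exact sum_comm
    _ = ∑ j ∈ range (N + 1), C ((n : ℚ) * tanhPowCoeff (n - 1) j) * Xv N j := by
        simp only [sum_range_kravchukCoeff_mul_tanhPowCoeff h]
    _ = psiAK1 N (DW N (Xv N n)) := by
        rw [DW_Xv h, map_mul, algHom_C, algebraMap_eq, psiAK1_Xv (by omega), mul_sum]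
        simp only [map_mul, mul_assoc]

end Polynomials

/-- `ψ` intertwines the basic Weitzenböck derivation and the first Kravchuk
derivation: `D_{K1}(ψ(P)) = ψ(D(P))` for all `P`. -/
theorem psiAK1_intertwines (N : ℕ) (P : MvPolynomial (Fin (N + 1)) ℚ) :
    DK1 N (psiAK1 N P) = psiAK1 N (DW N P) := by
  induction P using MvPolynomial.induction_on with
  | C a => rw [algHom_C, Derivation.map_algebraMap, derivation_C, map_zero]
  | add p q hp hq => rw [map_add, map_add, hp, hq, map_add, map_add]
  | mul_X p n hp =>
    simp only [map_mul, Derivation.leibniz, smul_eq_mul, map_add, hp, DK1_psiAK1_X]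
end

section
/- Let f, g ∈ ℚ⟦z⟧ be formal power series with zero constant term such that g(f(z)) = z (composition of formal power series). Define a_m := (coefficient of z^m in g) for m ≥ 1, and for k ≥ 0 define A(n,k) := n! · (coefficient of z^n in f^k). Then for all n ≥ 1 and all i with 0 ≤ i ≤ n−1: ∑_{j=i+1}^{n} a_{j−i} · A(n,j) = n · A(n−1, i). -/
/-- Composition `g(f(z))` of formal power series, for `f` with zero constant term:
the coefficient of `z^n` is `∑_{k=0}^n (coeff k g)·(coeff n f^k)` (for such `f`,
`coeff n (f^k) = 0` whenever `k > n`). -/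
noncomputable def PowerSeries.comp (g f : PowerSeries ℚ) : PowerSeries ℚ :=
  PowerSeries.mk fun n =>
    ∑ k ∈ Finset.range (n + 1), (PowerSeries.coeff k g) * (PowerSeries.coeff n (f ^ k))

/-!
Multiplying `g(f) = z` by `f^i` gives `∑ₖ aₖ f^(k+i) = z f^i`; comparing coefficients of `z^n`
yields `∑ₖ aₖ [z^n] f^(k+i) = [z^(n-1)] f^i`. Only `k ≤ n` contributes because `f^k` has order
at least `k`, and `a₀ = 0` together with `[z^n] f^j = 0` for `j > n` cuts the sum down to
`j = k + i ∈ [i+1, n]`. Multiplying by `n! = n·(n-1)!` gives the identity.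
-/

open Finset

namespace PowerSeries

section CommSemiring

variable {R : Type*} [CommSemiring R] {f : R⟦X⟧}

theorem coeff_pow_eq_zero_of_lt (hf : constantCoeff f = 0) {d k : ℕ} (h : d < k) :
    coeff d (f ^ k) = 0 :=
  X_pow_dvd_iff.mp (pow_dvd_pow_of_dvd (X_dvd_iff.mpr hf) k) d h

theorem coeff_mul_eq_of_coeff_eq {φ ψ : R⟦X⟧} {n : ℕ} (h : ∀ d ≤ n, coeff d φ = coeff d ψ)
    (χ : R⟦X⟧) : coeff n (φ * χ) = coeff n (ψ * χ) := by
  rw [coeff_mul, coeff_mul]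
  refine sum_congr rfl fun p hp => ?_
  rw [h p.1 (Finset.HasAntidiagonal.antidiagonal.fst_le hp)]

end CommSemiring

variable {f g : ℚ⟦X⟧}

theorem coeff_comp_eq_coeff_sum_range (hf : constantCoeff f = 0) {d N : ℕ} (hd : d ≤ N) :
    coeff d (comp g f) = coeff d (∑ k ∈ range (N + 1), C (coeff k g) * f ^ k) := by
  simp only [comp, coeff_mk, map_sum, coeff_C_mul]
  refine sum_subset (range_subset_range.mpr (by omega)) fun k _ hk => ?_
  rw [coeff_pow_eq_zero_of_lt hf (by simpa using hk), mul_zero]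

theorem sum_coeff_mul_coeff_succ_pow_add_of_comp_eq_X (hf : constantCoeff f = 0)
    (hcomp : comp g f = X) (n i : ℕ) :
    ∑ k ∈ range (n + 2), coeff k g * coeff (n + 1) (f ^ (k + i)) = coeff n (f ^ i) := by
  calc ∑ k ∈ range (n + 2), coeff k g * coeff (n + 1) (f ^ (k + i))
      = coeff (n + 1) ((∑ k ∈ range (n + 2), C (coeff k g) * f ^ k) * f ^ i) := by
        simp only [sum_mul, map_sum, mul_assoc, ← pow_add, coeff_C_mul]
    _ = coeff (n + 1) (comp g f * f ^ i) :=
        coeff_mul_eq_of_coeff_eq (fun d hd => (coeff_comp_eq_coeff_sum_range hf hd).symm) _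
    _ = coeff n (f ^ i) := by rw [hcomp, coeff_succ_X_mul]

theorem sum_Icc_coeff_sub_mul_coeff_pow_eq_sum_range (hf : constantCoeff f = 0)
    (hg : constantCoeff g = 0) (n i : ℕ) :
    ∑ j ∈ Icc (i + 1) n, coeff (j - i) g * coeff n (f ^ j)
      = ∑ k ∈ range (n + 1), coeff k g * coeff n (f ^ (k + i)) := by
  calc ∑ j ∈ Icc (i + 1) n, coeff (j - i) g * coeff n (f ^ j)
      = ∑ j ∈ (range (n + 1)).map (addRightEmbedding i), coeff (j - i) g * coeff n (f ^ j) := by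
        refine sum_subset (fun j hj => ?_) fun j hj hj' => ?_
        · simp only [mem_Icc] at hj
          simp only [mem_map, mem_range, addRightEmbedding_apply]
          exact ⟨j - i, by omega, by omega⟩
        · obtain ⟨k, hk, rfl⟩ := mem_map.mp hj
          simp only [mem_Icc, not_and_or, not_le, addRightEmbedding_apply] at hj' ⊢
          rcases hj' with hk_zero | hk_large
          · rw [show k + i - i = 0 by omega, coeff_zero_eq_constantCoeff_apply, hg, zero_mul]
          · rw [coeff_pow_eq_zero_of_lt hf hk_large, mul_zero]
    _ = ∑ k ∈ range (n + 1), coeff k g * coeff n (f ^ (k + i)) := by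
        simp only [sum_map, addRightEmbedding_apply, Nat.add_sub_cancel]

end PowerSeries

open PowerSeries Nat in
theorem sum_coeff_comp_eq_general (f g : PowerSeries ℚ)
    (hf : PowerSeries.constantCoeff f = 0) (hg : PowerSeries.constantCoeff g = 0)
    (hcomp : PowerSeries.comp g f = PowerSeries.X)
    (n : ℕ) (i : ℕ) :
    ∑ j ∈ Finset.Icc (i + 1) n,
        (PowerSeries.coeff (j - i) g)
          * ((Nat.factorial n : ℚ) * PowerSeries.coeff n (f ^ j))
      = n * ((Nat.factorial (n - 1) : ℚ) * PowerSeries.coeff (n - 1) (f ^ i)) := by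
  cases n with
  | zero => simp
  | succ n =>
    calc ∑ j ∈ Icc (i + 1) (n + 1), coeff (j - i) g * ((n + 1)! * coeff (n + 1) (f ^ j))
        = (n + 1)! * ∑ j ∈ Icc (i + 1) (n + 1), coeff (j - i) g * coeff (n + 1) (f ^ j) := by
          rw [mul_sum]
          exact sum_congr rfl fun j _ => mul_left_comm _ _ _
      _ = (n + 1)! * coeff n (f ^ i) := by
          rw [sum_Icc_coeff_sub_mul_coeff_pow_eq_sum_range hf hg,
            sum_coeff_mul_coeff_succ_pow_add_of_comp_eq_X hf hcomp]
      _ = (n + 1 : ℕ) * (n ! * coeff n (f ^ i)) := by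
          rw [Nat.factorial_succ]
          push_cast
          ring

/-- If `f, g` have zero constant term and `g(f(z)) = z`, then with
`a_m = coeff m g` and `A(n,k) = n!·coeff n (f^k)` one has
`∑_{j=i+1}^n a_{j-i} A(n,j) = n·A(n-1,i)` for all `n ≥ 1`, `0 ≤ i ≤ n-1`. -/
theorem sum_coeff_comp_eq (f g : PowerSeries ℚ)
    (hf : PowerSeries.constantCoeff f = 0) (hg : PowerSeries.constantCoeff g = 0)
    (hcomp : PowerSeries.comp g f = PowerSeries.X)
    (n : ℕ) (hn : 1 ≤ n) (i : ℕ) (hi : i ≤ n - 1) :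
    ∑ j ∈ Finset.Icc (i + 1) n,
        (PowerSeries.coeff (j - i) g)
          * ((Nat.factorial n : ℚ) * PowerSeries.coeff n (f ^ j))
      = n * ((Nat.factorial (n - 1) : ℚ) * PowerSeries.coeff (n - 1) (f ^ i)) :=
  sum_coeff_comp_eq_general f g hf hg hcomp n i
end

section
/- For every integer i ≥ 1, the exponential generating function of the numbers T(n,i) := ∑_{j=i}^{n} (−1)^{j−i} · 2^{n−j} · j! · S(n,j) · binom(j−1, i−1) (with T(n,i) := 0 for n < i) is given, as an identity of formal power series in ℚ⟦z⟧, by ∑_{n≥0} T(n,i)·z^n/n! = ((E − 1)·(E + 1)^{−1})^i, where E := exp(2z) = ∑_{m≥0} 2^m z^m/m! and E + 1 is invertible in ℚ⟦z⟧ (its constant term is 2). -/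
/-- `E = exp(2z) = ∑_m 2^m z^m/m!`. -/
noncomputable def E : PowerSeries ℚ := PowerSeries.mk fun m => (2 : ℚ) ^ m / Nat.factorial m

/-!
From `(exp z - 1)^j = j! ∑ₙ S(n,j) zⁿ/n!` we get `[zⁿ] (E - 1)^j = 2ⁿ j! S(n,j)/n!`, so
`T(n,i)/n! = ∑ⱼ gⱼ [zⁿ] (E - 1)^j` with
`gⱼ = (-1)^(j-i) binom(j-1,i-1)/2^j = [X^j] (X/(2+X))^i`.
Hence the exponential generating function of `T(·,i)` is `(X/(2+X))^i` with `E - 1` substituted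
for `X`, and substitution is a ring homomorphism sending `2 + X` to `E + 1`.
-/

open PowerSeries Finset Nat

theorem stirling2_eq_stirlingSecond_s14 (n k : ℕ) : stirling2 n k = stirlingSecond n k := by
  induction n generalizing k with
  | zero => cases k <;> rfl
  | succ n ih =>
    cases k with
    | zero => rfl
    | succ k => rw [stirling2, stirlingSecond_succ_succ, ih, ih, add_comm]

namespace PowerSeries

section ExpSubOne

variable {A : Type*} [CommRing A] [Algebra ℚ A]

theorem derivative_exp_sub_one_pow (j : ℕ) :
    derivative A ((exp A - 1) ^ (j + 1))
      = (j + 1) • ((exp A - 1) ^ (j + 1) + (exp A - 1) ^ j) := by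
  rw [Derivation.leibniz_pow, map_sub, derivative_exp, Derivation.map_one_eq_zero, sub_zero,
    Nat.add_sub_cancel, smul_eq_mul]
  congr 1
  ring

theorem factorial_mul_coeff_exp_sub_one_pow (n j : ℕ) :
    (n ! : A) * coeff n ((exp A - 1) ^ j) = j ! * stirlingSecond n j := by
  induction n generalizing j with
  | zero =>
    have h : constantCoeff (exp A - 1) = 0 := by simp
    cases j <;> simp [h]
  | succ n ih =>
    cases j with
    | zero => simp [coeff_one]
    | succ j =>
      calc ((n + 1) ! : A) * coeff (n + 1) ((exp A - 1) ^ (j + 1))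
          = n ! * coeff n (derivative A ((exp A - 1) ^ (j + 1))) := by
            rw [coeff_derivative, factorial_succ]; push_cast; ring
        _ = (j + 1) * (n ! * coeff n ((exp A - 1) ^ (j + 1))
              + n ! * coeff n ((exp A - 1) ^ j)) := by
            rw [derivative_exp_sub_one_pow, map_nsmul, map_add, nsmul_eq_mul]; push_cast; ring
        _ = (j + 1) ! * stirlingSecond (n + 1) (j + 1) := by
            rw [ih, ih, stirlingSecond_succ_succ, factorial_succ]; push_cast; ring

end ExpSubOne

section Field

variable {K : Type*} [Field K]

theorem subst_inv {a : K⟦X⟧} (ha : HasSubst a) {f : K⟦X⟧} (hf : constantCoeff f ≠ 0) :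
    subst a f⁻¹ = (subst a f : K⟦X⟧)⁻¹ := by
  have h : (subst a f⁻¹ : K⟦X⟧) * subst a f = 1 := by
    rw [← subst_mul ha, PowerSeries.inv_mul_cancel f hf, ← map_one (C (R := K)), subst_C]
    exact map_one _
  have hunit : constantCoeff (subst a f : K⟦X⟧) ≠ 0 :=
    right_ne_zero_of_mul_eq_one (by rw [← map_mul, h, map_one])
  exact (eq_inv_iff_mul_eq_one hunit).2 h

theorem inv_C_add_X {a : K} (ha : a ≠ 0) :
    (C a + X)⁻¹ = C a⁻¹ * rescale (-a⁻¹) (mk 1) := by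
  refine ((eq_inv_iff_mul_eq_one (by simpa using ha)).2 ?_).symm
  have h : C a + X = C a * rescale (-a⁻¹) (1 - X) := by
    rw [map_sub, map_one, rescale_X, mul_sub, mul_one, ← mul_assoc, ← map_mul, mul_neg,
      mul_inv_cancel₀ ha, map_neg, map_one]
    ring
  rw [h, mul_mul_mul_comm, ← map_mul, ← map_mul, mk_one_mul_one_sub_eq_one, map_one,
    inv_mul_cancel₀ ha, map_one, one_mul]

theorem coeff_inv_C_add_X_pow {a : K} (ha : a ≠ 0) (d m : ℕ) :
    coeff m ((C a + X)⁻¹ ^ (d + 1)) = (-1) ^ m * (d + m).choose d / a ^ (d + 1 + m) := by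
  rw [inv_C_add_X ha, mul_pow, ← map_pow, ← map_pow, mk_one_pow_eq_mk_choose_add, coeff_C_mul,
    coeff_rescale, coeff_mk]
  simp only [neg_eq_neg_one_mul a⁻¹, mul_pow, pow_add, inv_pow]
  field_simp

theorem coeff_X_mul_inv_C_add_X_pow {a : K} (ha : a ≠ 0) {i : ℕ} (hi : 1 ≤ i) (j : ℕ) :
    coeff j ((X * (C a + X)⁻¹) ^ i)
      = if i ≤ j then (-1) ^ (j - i) * (j - 1).choose (i - 1) / a ^ j else 0 := by
  obtain ⟨d, rfl⟩ := Nat.exists_eq_add_of_le' hi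
  rw [mul_pow, coeff_X_pow_mul']
  split_ifs with hij
  · obtain ⟨m, rfl⟩ := Nat.exists_eq_add_of_le hij
    rw [coeff_inv_C_add_X_pow ha, show d + 1 + m - 1 = d + m by omega, Nat.add_sub_cancel_left,
      Nat.add_sub_cancel]
  · rfl

end Field

end PowerSeries

theorem E_eq_rescale_exp : E = rescale 2 (exp ℚ) := by
  ext n
  simp [E, coeff_rescale, coeff_exp, div_eq_mul_inv]

theorem coeff_E_sub_one_pow (n j : ℕ) :
    coeff n ((E - 1 : ℚ⟦X⟧) ^ j) = (2 : ℚ) ^ n * j ! * stirlingSecond n j / n ! := by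
  have h : (E - 1) ^ j = rescale 2 ((exp ℚ - 1) ^ j) := by
    rw [E_eq_rescale_exp, map_pow, map_sub, map_one]
  rw [h, coeff_rescale, eq_div_iff (by positivity), mul_assoc, mul_comm (coeff n _),
    factorial_mul_coeff_exp_sub_one_pow]
  ring

theorem hasSubst_E_sub_one : HasSubst (E - 1) :=
  HasSubst.of_constantCoeff_zero' (by simp [E, constantCoeff_mk])

theorem coeff_subst_E_sub_one (f : ℚ⟦X⟧) (n : ℕ) :
    coeff n (subst (E - 1) f)
      = ∑ j ∈ range (n + 1), coeff j f * (2 ^ n * j ! * stirlingSecond n j / n !) := by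
  simp_rw [coeff_subst' hasSubst_E_sub_one, coeff_E_sub_one_pow, smul_eq_mul]
  refine finsum_eq_sum_of_support_subset _ fun j hj => ?_
  by_contra hjn
  rw [coe_range, Set.mem_Iio, not_lt] at hjn
  simp [stirlingSecond_eq_zero_of_lt (lt_of_lt_of_le n.lt_succ_self hjn)] at hj

theorem T_div_factorial {i : ℕ} (hi : 1 ≤ i) (n : ℕ) :
    T n i / n ! = ∑ j ∈ range (n + 1), coeff j ((X * (C 2 + X)⁻¹ : ℚ⟦X⟧) ^ i)
      * (2 ^ n * j ! * stirlingSecond n j / n !) := by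
  simp_rw [coeff_X_mul_inv_C_add_X_pow (two_ne_zero (α := ℚ)) hi, ite_mul, zero_mul]
  rw [← sum_filter, T, sum_div]
  have hIcc : (range (n + 1)).filter (i ≤ ·) = Icc i n := by
    ext j; simp only [mem_filter, mem_range, mem_Icc]; omega
  refine sum_congr hIcc.symm fun j hj => ?_
  have hjn : j ≤ n := mem_range_succ_iff.1 (mem_filter.1 hj).1
  rw [stirling2_eq_stirlingSecond_s14, pow_sub₀ _ two_ne_zero hjn]
  field_simp

theorem subst_E_sub_one_two_add_X : subst (E - 1) (C 2 + X : ℚ⟦X⟧) = E + 1 := by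
  rw [subst_add hasSubst_E_sub_one, subst_C, subst_X hasSubst_E_sub_one]
  change C (2 : ℚ) + (E - 1) = E + 1
  rw [map_ofNat]
  ring

/-- The exponential generating function of `T(·,i)` for `i ≥ 1`:
`∑_n T(n,i) z^n/n! = ((E-1)(E+1)⁻¹)^i` where `E = exp(2z)`. -/
theorem egf_T (i : ℕ) (hi : 1 ≤ i) :
    PowerSeries.mk (fun n => T n i / (Nat.factorial n : ℚ))
      = ((E - 1) * (E + 1)⁻¹) ^ i := by
  have ha := hasSubst_E_sub_one
  calc PowerSeries.mk _ = subst (E - 1) ((X * (C 2 + X)⁻¹ : ℚ⟦X⟧) ^ i) := by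
        ext n
        rw [coeff_mk, T_div_factorial hi, coeff_subst_E_sub_one]
    _ = ((E - 1) * (E + 1)⁻¹) ^ i := by
        rw [subst_pow ha, subst_mul ha, subst_inv ha (by simp), subst_E_sub_one_two_add_X,
          subst_X ha]
end

section
/- The numbers B(n,k) := k!·S(n,k) satisfy, for all n ≥ 1 and all i with 0 ≤ i ≤ n−1, the recurrence ∑_{j=i+1}^{n} ((−1)^{j+1−i}/(j−i))·j!·S(n,j) = n·i!·S(n−1,i). -/
lemma s2_zero : ∀ n k, n < k → stirling2 n k = 0
  | 0, _+1, _ => rfl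
  | n+1, k+1, h => by
      have h1 : n < k := Nat.lt_of_succ_lt_succ h
      simp [stirling2, s2_zero n k h1, s2_zero n (k+1) (h1.trans (Nat.lt_succ_self k))]

noncomputable def Sur (n k : ℕ) : ℚ := (k.factorial : ℚ) * (stirling2 n k : ℚ)

lemma Sur_zero_left (k : ℕ) : Sur 0 k = if k = 0 then 1 else 0 := by
  cases k <;> simp [Sur, stirling2]

lemma Sur_zero_right (n : ℕ) : Sur n 0 = if n = 0 then 1 else 0 := by
  cases n <;> simp [Sur, stirling2]

lemma Sur_eq_zero {n k : ℕ} (h : n < k) : Sur n k = 0 := by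
  simp [Sur, s2_zero n k h]

lemma Sur_succ (n k : ℕ) : Sur (n+1) k = k * Sur n k + k * Sur n (k-1) := by
  cases k with
  | zero => simp [Sur, stirling2]
  | succ k =>
      show Sur (n+1) (k+1) = _
      simp only [Sur, stirling2, Nat.factorial_succ, Nat.add_sub_cancel]
      push_cast
      ring

lemma choose_sum (n : ℕ) (g : ℕ → ℚ) :
    ∑ k ∈ Finset.range (n+2), (Nat.choose (n+1) k : ℚ) * g k
      = ∑ k ∈ Finset.range (n+1), (Nat.choose n k : ℚ) * g k
        + ∑ k ∈ Finset.range (n+1), (Nat.choose n k : ℚ) * g (k+1) := by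
  rw [Finset.sum_range_succ' (fun k => (Nat.choose (n+1) k : ℚ) * g k) (n+1)]
  have h1 : ∀ k ∈ Finset.range (n+1),
      (Nat.choose (n+1) (k+1) : ℚ) * g (k+1)
        = (Nat.choose n k : ℚ) * g (k+1) + (Nat.choose n (k+1) : ℚ) * g (k+1) := by
    intro k _
    rw [Nat.choose_succ_succ]
    push_cast
    ring
  rw [Finset.sum_congr rfl h1, Finset.sum_add_distrib]
  have h2 : ∑ k ∈ Finset.range (n+1), (Nat.choose n (k+1) : ℚ) * g (k+1)
        + (Nat.choose (n+1) 0 : ℚ) * g 0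
      = ∑ k ∈ Finset.range (n+1), (Nat.choose n k : ℚ) * g k := by
    have := (Finset.sum_range_succ' (fun k => (Nat.choose n k : ℚ) * g k) (n+1)).symm
    simp only [Nat.choose_zero_right] at this ⊢
    rw [this, Finset.sum_range_succ]
    simp [Nat.choose_succ_self]
  rw [add_assoc, h2, add_comm]

lemma Sur_conv (n : ℕ) : ∀ a b : ℕ,
    Sur n (a+b) = ∑ k ∈ Finset.range (n+1),
      (Nat.choose n k : ℚ) * (Sur k a * Sur (n-k) b) := by
  induction n with
  | zero =>
      intro a b
      simp only [Finset.range_one, Finset.sum_singleton, Nat.choose_self, Nat.cast_one,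
        one_mul, Nat.zero_sub]
      rcases a with _|a <;> rcases b with _|b <;> simp [Sur, stirling2]
  | succ n ih =>
      intro a b
      rw [show n+1+1 = n+2 from rfl, choose_sum n (fun k => Sur k a * Sur (n+1-k) b)]
      have e1 : ∀ k ∈ Finset.range (n+1),
          (Nat.choose n k : ℚ) * (Sur k a * Sur (n+1-k) b)
            = (b:ℚ) * ((Nat.choose n k : ℚ) * (Sur k a * Sur (n-k) b))
              + (b:ℚ) * ((Nat.choose n k : ℚ) * (Sur k a * Sur (n-k) (b-1))) := by
        intro k hk
        have hk' : k ≤ n := Nat.lt_succ_iff.mp (Finset.mem_range.mp hk)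
        have : n + 1 - k = (n - k) + 1 := by omega
        rw [this, Sur_succ]
        ring
      have e2 : ∀ k ∈ Finset.range (n+1),
          (Nat.choose n k : ℚ) * (Sur (k+1) a * Sur (n+1-(k+1)) b)
            = (a:ℚ) * ((Nat.choose n k : ℚ) * (Sur k a * Sur (n-k) b))
              + (a:ℚ) * ((Nat.choose n k : ℚ) * (Sur k (a-1) * Sur (n-k) b)) := by
        intro k hk
        have : n + 1 - (k+1) = n - k := by omega
        rw [this, Sur_succ]
        ring
      rw [Finset.sum_congr rfl e1, Finset.sum_congr rfl e2,
        Finset.sum_add_distrib, Finset.sum_add_distrib,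
        ← Finset.mul_sum, ← Finset.mul_sum, ← Finset.mul_sum, ← Finset.mul_sum,
        ← ih a b]
      have hb : (b:ℚ) * (∑ k ∈ Finset.range (n+1),
          (Nat.choose n k : ℚ) * (Sur k a * Sur (n-k) (b-1)))
            = (b:ℚ) * Sur n (a+b-1) := by
        cases b with
        | zero => simp
        | succ b =>
            simp only [Nat.add_sub_cancel]
            rw [← ih a b]
            all_goals (congr 2 <;> omega)
      have ha : (a:ℚ) * (∑ k ∈ Finset.range (n+1),
          (Nat.choose n k : ℚ) * (Sur k (a-1) * Sur (n-k) b))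
            = (a:ℚ) * Sur n (a+b-1) := by
        cases a with
        | zero => simp
        | succ a =>
            simp only [Nat.add_sub_cancel]
            rw [← ih a b]
            all_goals (congr 2 <;> omega)
      rw [hb, ha, Sur_succ n (a+b)]
      push_cast
      ring

lemma logsum : ∀ m : ℕ,
    ∑ t ∈ Finset.range m, ((-1:ℚ)^(t+2)/(t+1)) * Sur m (t+1)
      = if m = 1 then 1 else 0 := by
  intro m
  induction m with
  | zero => simp
  | succ n ih =>
      clear ih
      have e1 : ∀ t ∈ Finset.range (n+1),
          ((-1:ℚ)^(t+2)/(t+1)) * Sur (n+1) (t+1)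
            = (-1:ℚ)^t * Sur n (t+1) + (-1:ℚ)^t * Sur n t := by
        intro t _
        rw [Sur_succ n (t+1)]
        have ht : ((t:ℚ)+1) ≠ 0 := by positivity
        have hp : (-1:ℚ)^(t+2) = (-1:ℚ)^t := by
          rw [pow_add]; ring
        simp only [Nat.add_sub_cancel, hp]
        push_cast
        field_simp
      rw [Finset.sum_congr rfl e1, Finset.sum_add_distrib]
      have key : ∑ t ∈ Finset.range (n+1), (-1:ℚ)^t * Sur n (t+1)
          = Sur n 0 - ∑ t ∈ Finset.range (n+1), (-1:ℚ)^t * Sur n t := by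
        have h2 : ∑ t ∈ Finset.range (n+2), (-1:ℚ)^t * Sur n t
            = ∑ t ∈ Finset.range (n+1), (-1:ℚ)^(t+1) * Sur n (t+1) + Sur n 0 := by
          simpa using Finset.sum_range_succ' (fun t => (-1:ℚ)^t * Sur n t) (n+1)
        have h3 : ∑ t ∈ Finset.range (n+2), (-1:ℚ)^t * Sur n t
            = ∑ t ∈ Finset.range (n+1), (-1:ℚ)^t * Sur n t := by
          rw [Finset.sum_range_succ, Sur_eq_zero (Nat.lt_succ_self n)]
          ring
        have h4 : ∑ t ∈ Finset.range (n+1), (-1:ℚ)^(t+1) * Sur n (t+1)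
            = - ∑ t ∈ Finset.range (n+1), (-1:ℚ)^t * Sur n (t+1) := by
          rw [← Finset.sum_neg_distrib]
          refine Finset.sum_congr rfl fun t _ => ?_
          ring
        rw [h3] at h2
        rw [h4] at h2
        linarith
      rw [key, Sur_zero_right]
      rcases n with _|n <;> simp

/-- The numbers `B(n,k) = k!·S(n,k)` satisfy
`∑_{j=i+1}^n ((-1)^{j+1-i}/(j-i))·j!·S(n,j) = n·i!·S(n-1,i)` for `n ≥ 1`, `0 ≤ i ≤ n-1`. -/
theorem stirling2_recurrence (n : ℕ) (hn : 1 ≤ n) (i : ℕ) (hi : i ≤ n - 1) :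
    ∑ j ∈ Finset.Icc (i + 1) n,
        ((-1 : ℚ) ^ (j + 1 - i) / ((j : ℚ) - (i : ℚ))) * (Nat.factorial j) * stirling2 n j
      = n * (Nat.factorial i) * stirling2 (n - 1) i := by
  have hin : i + 1 ≤ n := by omega
  -- reindex to range
  have step1 : ∑ j ∈ Finset.Icc (i + 1) n,
        ((-1 : ℚ) ^ (j + 1 - i) / ((j : ℚ) - (i : ℚ))) * (Nat.factorial j) * stirling2 n j
      = ∑ t ∈ Finset.range (n - i), ((-1:ℚ)^(t+2)/(t+1)) * Sur n (i+(t+1)) := by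
    rw [show Finset.Icc (i+1) n = Finset.Ico (i+1) (n+1) by rw [Finset.Ico_add_one_right_eq_Icc],
      Finset.sum_Ico_eq_sum_range]
    have : n + 1 - (i + 1) = n - i := by omega
    rw [this]
    refine Finset.sum_congr rfl fun t _ => ?_
    have h1 : i + 1 + t + 1 - i = t + 2 := by omega
    have h2 : ((i + 1 + t : ℕ) : ℚ) - (i:ℚ) = (t:ℚ) + 1 := by push_cast; ring
    rw [h1, h2]
    have h3 : i + 1 + t = i + (t+1) := by omega
    rw [h3]
    simp [Sur, mul_assoc]
  rw [step1]
  have step2 : ∀ t ∈ Finset.range (n - i),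
      ((-1:ℚ)^(t+2)/(t+1)) * Sur n (i+(t+1))
        = ∑ k ∈ Finset.range (n+1),
            (Nat.choose n k : ℚ) * Sur k i * (((-1:ℚ)^(t+2)/(t+1)) * Sur (n-k) (t+1)) := by
    intro t _
    rw [Sur_conv n i (t+1), Finset.mul_sum]
    refine Finset.sum_congr rfl fun k _ => ?_
    ring
  rw [Finset.sum_congr rfl step2, Finset.sum_comm]
  have step3 : ∀ k ∈ Finset.range (n+1),
      ∑ t ∈ Finset.range (n - i),
          (Nat.choose n k : ℚ) * Sur k i * (((-1:ℚ)^(t+2)/(t+1)) * Sur (n-k) (t+1))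
        = (Nat.choose n k : ℚ) * Sur k i * (if n - k = 1 then 1 else 0) := by
    intro k hk
    have hk' : k ≤ n := Nat.lt_succ_iff.mp (Finset.mem_range.mp hk)
    rw [← Finset.mul_sum]
    by_cases hki : i ≤ k
    · congr 1
      rw [← logsum (n-k)]
      refine (Finset.sum_subset (Finset.range_subset_range.mpr (by omega)) ?_).symm
      intro t ht htk
      have : n - k < t + 1 := by
        simp only [Finset.mem_range] at ht htk
        omega
      rw [Sur_eq_zero this]
      ring
    · rw [Sur_eq_zero (by omega : k < i)]
      ring
  rw [Finset.sum_congr rfl step3]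
  rw [Finset.sum_eq_single (n-1)]
  · have h1 : n - (n-1) = 1 := by omega
    rw [h1, if_pos rfl, mul_one]
    have h2 : Nat.choose n (n-1) = n := by
      have := Nat.choose_symm (Nat.sub_le n 1)
      rw [h1] at this
      rw [← this, Nat.choose_one_right]
    rw [h2, Sur]
    ring
  · intro k hk hne
    have hk' : k ≤ n := Nat.lt_succ_iff.mp (Finset.mem_range.mp hk)
    have : n - k ≠ 1 := by omega
    rw [if_neg this]
    ring
  · intro h
    exact absurd (Finset.mem_range.mpr (by omega)) h
end
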